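/- arXiv:1903.09967 — 4 statements merged into one kernel-verified Lean document; each statement's English description precedes it below -/
import Mathlib

section
/- Mixed Hölder interpolation (Lemma 4.1(i)). Let d ≥ 1, θ ∈ [0,1] and β, γ > 0. There is a constant C = C(θ, γ, β) > 0 such that for every bounded function f : ℝ^d×ℝ^d → ℝ with ‖f‖_{C^γ_x} < ∞ and ‖f‖_{C^β_v} < ∞, one has sup_{h≠0, h'≠0} ‖δ_{h;1}^{[γ]+1} δ_{h';2}^{[β]+1} f‖_∞ / (|h|^{θγ}|h'|^{(1−θ)β}) ≤ C·‖f‖_{C^γ_x}^θ·‖f‖_{C^β_v}^{1−θ}. -/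
/- Mixed Hölder interpolation (Lemma 4.1(i)):
for θ ∈ [0,1], β, γ > 0 there is C = C(θ,γ,β) such that
sup_{h,h'≠0} ‖δ_{h;1}^{[γ]+1} δ_{h';2}^{[β]+1} f‖_∞ / (|h|^{θγ}|h'|^{(1−θ)β})
  ≤ C ‖f‖_{C^γ_x}^θ ‖f‖_{C^β_v}^{1−θ}. -/

open scoped ENNReal NNReal

noncomputable section

abbrev Ed (d : ℕ) : Type := EuclideanSpace ℝ (Fin d)

variable {V W F : Type*}

/-- first-order difference operator `δ_h f = f(·+h) − f(·)` -/
def dOp [AddGroup V] [AddGroup F] (h : V) (f : V → F) : V → F := fun x => f (x + h) - f x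

/-- sup-norm, valued in `ℝ≥0∞` -/
def supN [NormedAddCommGroup F] (f : V → F) : ℝ≥0∞ := ⨆ x, (‖f x‖₊ : ℝ≥0∞)

/-- Hölder–Zygmund seminorm `[f]_{C^s} = sup_{h≠0} ‖δ_h^{[s]+1} f‖_∞/|h|^s`,
where `[s]+1 = ⌈s⌉` for `s > 0`. -/
def zygSemi [NormedAddCommGroup V] [NormedAddCommGroup F] (s : ℝ) (f : V → F) : ℝ≥0∞ :=
  ⨆ (h : V) (_ : h ≠ 0), supN ((dOp h)^[⌈s⌉₊] f) / (‖h‖₊ : ℝ≥0∞) ^ s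

/-- Hölder–Zygmund norm `‖f‖_{C^s} = ‖f‖_∞ + [f]_{C^s}` -/
def holderN [NormedAddCommGroup V] [NormedAddCommGroup F] (s : ℝ) (f : V → F) : ℝ≥0∞ :=
  supN f + zygSemi s f

/-- difference operator in the first (x-)variable, for curried functions -/
def dX [AddGroup V] [AddGroup F] (h : V) (f : V → W → F) : V → W → F :=
  fun x v => f (x + h) v - f x v

/-- difference operator in the second (v-)variable, for curried functions -/
def dV [AddGroup W] [AddGroup F] (h : W) (f : V → W → F) : V → W → F :=
  fun x v => f x (v + h) - f x v

/-- sup-norm of a two-variable function -/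
def supN2 [NormedAddCommGroup F] (f : V → W → F) : ℝ≥0∞ := ⨆ x, ⨆ v, (‖f x v‖₊ : ℝ≥0∞)

/-- `‖f‖_{C^s_x} = sup_v ‖f(·,v)‖_{C^s}` -/
def holderX [NormedAddCommGroup V] [NormedAddCommGroup F] (s : ℝ) (f : V → W → F) : ℝ≥0∞ :=
  ⨆ v, holderN s (fun x => f x v)

/-- `‖f‖_{C^s_v} = sup_x ‖f(x,·)‖_{C^s}` -/
def holderV [NormedAddCommGroup W] [NormedAddCommGroup F] (s : ℝ) (f : V → W → F) : ℝ≥0∞ :=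
  ⨆ x, holderN s (f x)

/-!
Fix both increments. Since `δ_{h;1}` and `δ_{h';2}` commute, the mixed difference can be read
either as a `[γ]+1`-fold difference in `x` of `δ_{h';2}^{[β]+1} f`, whose `x`-seminorm is at most
`2^{[β]+1} ‖f‖_{C^γ_x}`, or symmetrically in `v`. This gives two bounds,
`≲ ‖f‖_{C^γ_x} |h|^γ` and `≲ ‖f‖_{C^β_v} |h'|^β`, and the minimum of two numbers is at most
their weighted geometric mean with weights `θ` and `1 - θ`.
-/

theorem ENNReal.le_mul_rpow_mul_rpow {x a b K : ℝ≥0∞} {θ : ℝ} (hθ : θ ∈ Set.Icc (0 : ℝ) 1)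
    (ha : x ≤ K * a) (hb : x ≤ K * b) : x ≤ K * a ^ θ * b ^ (1 - θ) := by
  obtain ⟨hθ0, hθ1⟩ := hθ
  have hθ1' : 0 ≤ 1 - θ := sub_nonneg.2 hθ1
  have split : ∀ y : ℝ≥0∞, y = y ^ θ * y ^ (1 - θ) := fun y => by
    rw [← ENNReal.rpow_add_of_nonneg _ _ hθ0 hθ1', add_sub_cancel, ENNReal.rpow_one]
  calc x = x ^ θ * x ^ (1 - θ) := split x
    _ ≤ (K * a) ^ θ * (K * b) ^ (1 - θ) := by gcongr
    _ = (K ^ θ * K ^ (1 - θ)) * a ^ θ * b ^ (1 - θ) := by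
      rw [ENNReal.mul_rpow_of_nonneg _ _ hθ0, ENNReal.mul_rpow_of_nonneg _ _ hθ1']; ring
    _ = K * a ^ θ * b ^ (1 - θ) := by rw [← split]

lemma iterate_dOp_sub [AddGroup V] [AddCommGroup F] (h : V) (m : ℕ) (a b : V → F) :
    (dOp h)^[m] (a - b) = (dOp h)^[m] a - (dOp h)^[m] b := by
  induction m generalizing a b with
  | zero => rfl
  | succ m ih =>
    have hsub : dOp h (a - b) = dOp h a - dOp h b := by
      funext x; simp only [dOp, Pi.sub_apply]; abel
    rw [Function.iterate_succ_apply, hsub, ih]; rfl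

lemma supN_sub_le [NormedAddCommGroup F] (a b : V → F) : supN (a - b) ≤ supN a + supN b :=
  iSup_le fun x => calc
    (‖(a - b) x‖₊ : ℝ≥0∞) ≤ ‖a x‖₊ + ‖b x‖₊ := by exact_mod_cast nnnorm_sub_le (a x) (b x)
    _ ≤ supN a + supN b := add_le_add (le_iSup (fun x => (‖a x‖₊ : ℝ≥0∞)) x)
      (le_iSup (fun x => (‖b x‖₊ : ℝ≥0∞)) x)

lemma div_rpow_le_zygSemi [NormedAddCommGroup V] [NormedAddCommGroup F] (s : ℝ) {h : V}
    (hh : h ≠ 0) (g : V → F) :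
    supN ((dOp h)^[⌈s⌉₊] g) / (‖h‖₊ : ℝ≥0∞) ^ s ≤ zygSemi s g :=
  le_iSup₂ (f := fun h (_ : h ≠ 0) => supN ((dOp h)^[⌈s⌉₊] g) / (‖h‖₊ : ℝ≥0∞) ^ s) h hh

lemma zygSemi_sub_le [NormedAddCommGroup V] [NormedAddCommGroup F] (s : ℝ) (a b : V → F) :
    zygSemi s (a - b) ≤ zygSemi s a + zygSemi s b := by
  refine iSup₂_le fun h hh => ?_
  calc supN ((dOp h)^[⌈s⌉₊] (a - b)) / (‖h‖₊ : ℝ≥0∞) ^ s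
      ≤ (supN ((dOp h)^[⌈s⌉₊] a) + supN ((dOp h)^[⌈s⌉₊] b)) / (‖h‖₊ : ℝ≥0∞) ^ s := by
        rw [iterate_dOp_sub]; exact ENNReal.div_le_div_right (supN_sub_le _ _) _
    _ ≤ zygSemi s a + zygSemi s b := by
        rw [ENNReal.add_div]
        exact add_le_add (div_rpow_le_zygSemi s hh a) (div_rpow_le_zygSemi s hh b)

lemma supN_iterate_dOp_le [NormedAddCommGroup V] [NormedAddCommGroup F] (s : ℝ) {h : V}
    (hh : h ≠ 0) (g : V → F) :
    supN ((dOp h)^[⌈s⌉₊] g) ≤ zygSemi s g * (‖h‖₊ : ℝ≥0∞) ^ s := by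
  have hpos : (‖h‖₊ : ℝ≥0∞) ^ s ≠ 0 := by simp [ENNReal.rpow_eq_zero_iff, hh]
  have hfin : (‖h‖₊ : ℝ≥0∞) ^ s ≠ ⊤ := by simp [ENNReal.rpow_eq_top_iff, hh]
  exact (ENNReal.div_le_iff hpos hfin).1 (div_rpow_le_zygSemi s hh g)

lemma iterate_dX_slice [AddGroup V] [AddGroup F] (h : V) (m : ℕ) (f : V → W → F) (v : W) :
    (fun x => (dX h)^[m] f x v) = (dOp h)^[m] (fun x => f x v) := by
  induction m generalizing f with
  | zero => rfl
  | succ m ih => rw [Function.iterate_succ_apply, Function.iterate_succ_apply, ih]; rfl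

lemma dX_commute_dV [AddGroup V] [AddGroup W] [AddCommGroup F] (h : V) (h' : W) :
    Function.Commute (dX (F := F) h) (dV h') := fun f => by
  funext x v; simp only [dX, dV]; abel

lemma swap_iterate_dV [AddGroup W] [AddGroup F] (h : W) (n : ℕ) (f : V → W → F) :
    Function.swap ((dV h)^[n] f) = (dX h)^[n] (Function.swap f) := by
  induction n generalizing f with
  | zero => rfl
  | succ n ih => rw [Function.iterate_succ_apply, Function.iterate_succ_apply, ← ih]; rfl

lemma swap_iterate_dX [AddGroup V] [AddGroup F] (h : V) (m : ℕ) (f : V → W → F) :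
    Function.swap ((dX h)^[m] f) = (dV h)^[m] (Function.swap f) := by
  induction m generalizing f with
  | zero => rfl
  | succ m ih => rw [Function.iterate_succ_apply, Function.iterate_succ_apply, ← ih]; rfl

lemma zygSemi_iterate_dV_slice_le [NormedAddCommGroup V] [AddGroup W] [NormedAddCommGroup F]
    (s : ℝ) (h' : W) (n : ℕ) (f : V → W → F) (v : W) :
    zygSemi s (fun x => (dV h')^[n] f x v) ≤ 2 ^ n * ⨆ w, zygSemi s (fun x => f x w) := by
  induction n generalizing v with
  | zero => simpa using le_iSup (fun w => zygSemi s (fun x => f x w)) v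
  | succ n ih =>
    set G := (dV h')^[n] f
    have hG : (fun x => (dV h')^[n + 1] f x v) = (fun x => G x (v + h')) - fun x => G x v := by
      funext x; rw [Function.iterate_succ_apply']; rfl
    calc zygSemi s (fun x => (dV h')^[n + 1] f x v)
        ≤ zygSemi s (fun x => G x (v + h')) + zygSemi s (fun x => G x v) := by
          rw [hG]; exact zygSemi_sub_le s _ _
      _ ≤ 2 ^ n * (⨆ w, zygSemi s (fun x => f x w))
          + 2 ^ n * (⨆ w, zygSemi s (fun x => f x w)) := add_le_add (ih _) (ih v)
      _ = 2 ^ (n + 1) * ⨆ w, zygSemi s (fun x => f x w) := by ring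

lemma supN2_iterate_dX_iterate_dV_le_holderX [NormedAddCommGroup V] [AddGroup W]
    [NormedAddCommGroup F] (s : ℝ) {h : V} (hh : h ≠ 0) (h' : W) (n : ℕ)
    (f : V → W → F) :
    supN2 ((dX h)^[⌈s⌉₊] ((dV h')^[n] f)) ≤ 2 ^ n * holderX s f * (‖h‖₊ : ℝ≥0∞) ^ s := by
  refine iSup_le fun x => iSup_le fun v => ?_
  set g := fun x => (dV h')^[n] f x v
  calc (‖(dX h)^[⌈s⌉₊] ((dV h')^[n] f) x v‖₊ : ℝ≥0∞)
      = ‖(dOp h)^[⌈s⌉₊] g x‖₊ := by rw [← iterate_dX_slice]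
    _ ≤ supN ((dOp h)^[⌈s⌉₊] g) := le_iSup (fun x => (‖(dOp h)^[⌈s⌉₊] g x‖₊ : ℝ≥0∞)) x
    _ ≤ zygSemi s g * (‖h‖₊ : ℝ≥0∞) ^ s := supN_iterate_dOp_le s hh g
    _ ≤ 2 ^ n * holderX s f * (‖h‖₊ : ℝ≥0∞) ^ s := by
        gcongr
        calc zygSemi s g ≤ 2 ^ n * ⨆ w, zygSemi s (fun x => f x w) :=
              zygSemi_iterate_dV_slice_le s h' n f v
          _ ≤ 2 ^ n * holderX s f := by
            gcongr; exact iSup_mono fun w => (le_add_self : _ ≤ supN _ + _)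

lemma supN2_iterate_dX_iterate_dV_le_holderV [AddGroup V] [NormedAddCommGroup W]
    [NormedAddCommGroup F] (s : ℝ) {h' : W} (hh' : h' ≠ 0) (h : V) (m : ℕ)
    (f : V → W → F) :
    supN2 ((dX h)^[m] ((dV h')^[⌈s⌉₊] f)) ≤ 2 ^ m * holderV s f * (‖h'‖₊ : ℝ≥0∞) ^ s := by
  have hswap : supN2 ((dX h)^[m] ((dV h')^[⌈s⌉₊] f))
      = supN2 ((dX h')^[⌈s⌉₊] ((dV h)^[m] (Function.swap f))) := by
    rw [(((dX_commute_dV h h').iterate_left m).iterate_right _) f]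
    rw [← swap_iterate_dX h m f, ← swap_iterate_dV h' _ ((dX h)^[m] f)]
    exact iSup_comm
  rw [hswap]
  exact supN2_iterate_dX_iterate_dV_le_holderX s hh' h m (Function.swap f)

theorem mixed_holder_interpolation_general
    (d : ℕ) (θ β γ : ℝ) (hθ : θ ∈ Set.Icc (0:ℝ) 1) :
    ∃ C > (0:ℝ), ∀ f : Ed d → Ed d → ℝ,
      holderX γ f ≠ ⊤ → holderV β f ≠ ⊤ →
      (⨆ (h : Ed d) (_ : h ≠ 0) (h' : Ed d) (_ : h' ≠ 0),
          supN2 ((dX h)^[⌈γ⌉₊] ((dV h')^[⌈β⌉₊] f)) /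
            ((‖h‖₊ : ℝ≥0∞) ^ (θ * γ) * (‖h'‖₊ : ℝ≥0∞) ^ ((1 - θ) * β)))
        ≤ ENNReal.ofReal C * (holderX γ f) ^ θ * (holderV β f) ^ (1 - θ) := by
  set K : ℝ≥0∞ := 2 ^ (⌈β⌉₊ + ⌈γ⌉₊)
  refine ⟨(2 : ℝ) ^ (⌈β⌉₊ + ⌈γ⌉₊), by positivity, fun f _ _ => ?_⟩
  refine iSup₂_le fun h hh => iSup₂_le fun h' hh' => ?_
  have hK : ENNReal.ofReal (2 ^ (⌈β⌉₊ + ⌈γ⌉₊)) = K := by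
    rw [ENNReal.ofReal_pow zero_le_two, ENNReal.ofReal_ofNat]
  have boundX := supN2_iterate_dX_iterate_dV_le_holderX γ hh h' ⌈β⌉₊ f
  have boundV := supN2_iterate_dX_iterate_dV_le_holderV β hh' h ⌈γ⌉₊ f
  have le_K : ∀ k : ℕ, k ≤ ⌈β⌉₊ + ⌈γ⌉₊ → ∀ a b : ℝ≥0∞, 2 ^ k * a * b ≤ K * (a * b) :=
    fun k hk a b => by
      rw [mul_assoc]; exact mul_le_mul_left (pow_le_pow_right₀ one_le_two hk) _
  have mixed := ENNReal.le_mul_rpow_mul_rpow hθ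
    (boundX.trans (le_K _ (Nat.le_add_right _ _) _ _))
    (boundV.trans (le_K _ (Nat.le_add_left _ _) _ _))
  refine ENNReal.div_le_of_le_mul (mixed.trans_eq ?_)
  rw [hK, ENNReal.mul_rpow_of_nonneg _ _ hθ.1, ENNReal.mul_rpow_of_nonneg _ _ (sub_nonneg.2 hθ.2),
    ← ENNReal.rpow_mul, ← ENNReal.rpow_mul, mul_comm γ, mul_comm β]
  ring

theorem mixed_holder_interpolation
    (d : ℕ) (hd : 1 ≤ d) (θ β γ : ℝ) (hθ : θ ∈ Set.Icc (0:ℝ) 1) (hβ : 0 < β) (hγ : 0 < γ) :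
    ∃ C > (0:ℝ), ∀ f : Ed d → Ed d → ℝ,
      holderX γ f ≠ ⊤ → holderV β f ≠ ⊤ →
      (⨆ (h : Ed d) (_ : h ≠ 0) (h' : Ed d) (_ : h' ≠ 0),
          supN2 ((dX h)^[⌈γ⌉₊] ((dV h')^[⌈β⌉₊] f)) /
            ((‖h‖₊ : ℝ≥0∞) ^ (θ * γ) * (‖h'‖₊ : ℝ≥0∞) ^ ((1 - θ) * β)))
        ≤ ENNReal.ofReal C * (holderX γ f) ^ θ * (holderV β f) ^ (1 - θ) :=
  mixed_holder_interpolation_general d θ β γ hθ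
end
end

section
/- Dyadic sums over the interaction index set (Lemma 6.8(ii)). Let α > 0 and c₁ ≥ 1. For t ≥ 0 and j ≥ 1 define Θ^t_j := {ℓ ∈ ℕ₀ : 2^ℓ ≤ 2⁴c₁(2^j + t·2^{(1+α)j}) and 2^j ≤ 2⁴c₁(2^ℓ + t·2^{(1+α)ℓ})}. Then for every β > 0 there is a constant C = C(c₁, β) > 0 such that for all j ≥ 1 and all t ≥ 0: Σ_{ℓ∈Θ^t_j} 2^{−βℓ} ≤ C·(2^{−j} + t·2^{(α−1)j})^β and Σ_{ℓ∈Θ^t_j} 2^{βℓ} ≤ C·(2^j + t·2^{(1+α)j})^β. -/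
/- Dyadic sums over the interaction index set (Lemma 6.8(ii)):
Θ^t_j := {ℓ ∈ ℕ₀ : 2^ℓ ≤ 2⁴c₁(2^j + t·2^{(1+α)j}) and 2^j ≤ 2⁴c₁(2^ℓ + t·2^{(1+α)ℓ})}.
For every β > 0 there is C = C(c₁,β) > 0 such that for all j ≥ 1, t ≥ 0:
Σ_{ℓ∈Θ^t_j} 2^{−βℓ} ≤ C(2^{−j} + t·2^{(α−1)j})^β and
Σ_{ℓ∈Θ^t_j} 2^{βℓ} ≤ C(2^j + t·2^{(1+α)j})^β. -/

noncomputable section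

/-- the interaction index set `Θ^t_j` -/
def ThetaSet (α c₁ t : ℝ) (j : ℕ) : Set ℕ :=
  {ℓ : ℕ | (2:ℝ) ^ ℓ ≤ 2 ^ 4 * c₁ * ((2:ℝ) ^ j + t * (2:ℝ) ^ ((1 + α) * (j : ℝ))) ∧
           (2:ℝ) ^ j ≤ 2 ^ 4 * c₁ * ((2:ℝ) ^ ℓ + t * (2:ℝ) ^ ((1 + α) * (ℓ : ℝ)))}

/-! Every `ℓ ∈ Θ^t_j` satisfies `2^ℓ ≤ 2⁴c₁X` and `2^{-ℓ} ≤ 2⁴c₁Y`, where `X = 2^j + t2^{(1+α)j}` and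
`Y = 2^{-j} + t2^{(α-1)j}`; the second comes from dividing the defining inequality `2^j ≤ 2⁴c₁(2^ℓ + t2^{(1+α)ℓ})`
by `2^{j+ℓ}` when `ℓ ≤ j`, and is trivial when `ℓ ≥ j`. A set of naturals on which `2^ℓ ≤ B` (resp. `2^{-ℓ} ≤ A`)
has a largest (resp. smallest) element, so the sum of `2^{βℓ}` (resp. `2^{-βℓ}`) over it is dominated by a geometric
series whose first term is at most `B^β` (resp. `A^β`). -/

open Real

theorem tsum_le_div_one_sub_of_le_mul_pow {ι : Type*} {f : ι → ℝ} (hf : ∀ i, 0 ≤ f i)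
    {e : ι → ℕ} (he : Function.Injective e) {c q : ℝ} (hc : 0 ≤ c) (hq0 : 0 ≤ q) (hq1 : q < 1)
    (hfe : ∀ i, f i ≤ c * q ^ e i) :
    ∑' i, f i ≤ c / (1 - q) := by
  have hg : Summable fun n : ℕ => c * q ^ n := (summable_geometric_of_lt_one hq0 hq1).mul_left c
  calc ∑' i, f i ≤ ∑' n : ℕ, c * q ^ n :=
        Summable.tsum_le_tsum_of_inj e he (fun n _ => by positivity) hfe
          ((hg.comp_injective he).of_nonneg_of_le hf hfe) hg
    _ = c / (1 - q) := by rw [tsum_mul_left, tsum_geometric_of_lt_one hq0 hq1, div_eq_mul_inv]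

section DyadicSums

variable {b β : ℝ} {S : Set ℕ}

theorem tsum_rpow_neg_mul_le (hb : 1 < b) (hβ : 0 < β) {A : ℝ} (hA : 0 ≤ A)
    (hS : ∀ ℓ ∈ S, (b ^ ℓ)⁻¹ ≤ A) :
    ∑' ℓ : S, b ^ (-(β * ℓ)) ≤ A ^ β / (1 - b ^ (-β)) := by
  have hb0 : 0 < b := one_pos.trans hb
  have hq1 : b ^ (-β) < 1 := rpow_lt_one_of_one_lt_of_neg hb (neg_neg_of_pos hβ)
  rcases S.eq_empty_or_nonempty with rfl | hne
  · rw [tsum_empty]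
    exact div_nonneg (rpow_nonneg hA β) (sub_nonneg.2 hq1.le)
  set m := sInf S
  have hm (ℓ : S) : m ≤ ℓ := Nat.sInf_le ℓ.2
  have hsplit (ℓ : S) : b ^ (-(β * ℓ)) = b ^ (-(β * m)) * (b ^ (-β)) ^ ((ℓ : ℕ) - m) := by
    rw [← rpow_natCast, ← rpow_mul hb0.le, ← rpow_add hb0, Nat.cast_sub (hm ℓ)]
    ring_nf
  have hfirst : b ^ (-(β * m)) ≤ A ^ β := by
    rw [neg_mul_eq_mul_neg, mul_comm, rpow_mul hb0.le, rpow_neg hb0.le, rpow_natCast]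
    exact rpow_le_rpow (by positivity) (hS m (Nat.sInf_mem hne)) hβ.le
  calc ∑' ℓ : S, b ^ (-(β * ℓ)) ≤ b ^ (-(β * m)) / (1 - b ^ (-β)) :=
        tsum_le_div_one_sub_of_le_mul_pow (fun _ => by positivity)
          (fun ℓ ℓ' h => Subtype.ext (by have := hm ℓ; have := hm ℓ'; omega))
          (by positivity) (by positivity) hq1 (fun ℓ => (hsplit ℓ).le)
    _ ≤ A ^ β / (1 - b ^ (-β)) := div_le_div_of_nonneg_right hfirst (sub_nonneg.2 hq1.le)

theorem tsum_rpow_mul_le (hb : 1 < b) (hβ : 0 < β) {B : ℝ} (hB : 0 ≤ B)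
    (hS : ∀ ℓ ∈ S, b ^ ℓ ≤ B) :
    ∑' ℓ : S, b ^ (β * ℓ) ≤ B ^ β / (1 - b ^ (-β)) := by
  have hb0 : 0 < b := one_pos.trans hb
  have hq1 : b ^ (-β) < 1 := rpow_lt_one_of_one_lt_of_neg hb (neg_neg_of_pos hβ)
  rcases S.eq_empty_or_nonempty with rfl | hne
  · rw [tsum_empty]
    exact div_nonneg (rpow_nonneg hB β) (sub_nonneg.2 hq1.le)
  have hbdd : BddAbove S := by
    obtain ⟨n, hn⟩ := pow_unbounded_of_one_lt B hb
    exact ⟨n, fun ℓ hℓ => ((pow_lt_pow_iff_right₀ hb).1 ((hS ℓ hℓ).trans_lt hn)).le⟩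
  set L := sSup S
  have hL (ℓ : S) : (ℓ : ℕ) ≤ L := le_csSup hbdd ℓ.2
  have hsplit (ℓ : S) : b ^ (β * ℓ) = b ^ (β * L) * (b ^ (-β)) ^ (L - (ℓ : ℕ)) := by
    rw [← rpow_natCast, ← rpow_mul hb0.le, ← rpow_add hb0, Nat.cast_sub (hL ℓ)]
    ring_nf
  have hfirst : b ^ (β * L) ≤ B ^ β := by
    rw [mul_comm, rpow_natCast_mul hb0.le]
    exact rpow_le_rpow (by positivity) (hS L (Nat.sSup_mem hne hbdd)) hβ.le
  calc ∑' ℓ : S, b ^ (β * ℓ) ≤ b ^ (β * L) / (1 - b ^ (-β)) :=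
        tsum_le_div_one_sub_of_le_mul_pow (fun _ => by positivity)
          (fun ℓ ℓ' h => Subtype.ext (by have := hL ℓ; have := hL ℓ'; omega))
          (by positivity) (by positivity) hq1 (fun ℓ => (hsplit ℓ).le)
    _ ≤ B ^ β / (1 - b ^ (-β)) := div_le_div_of_nonneg_right hfirst (sub_nonneg.2 hq1.le)

end DyadicSums

theorem inv_two_pow_le_of_mem_thetaSet {α c₁ t : ℝ} (hα : 0 ≤ α) (hc₁ : 1 ≤ 2 ^ 4 * c₁) (ht : 0 ≤ t)
    {j ℓ : ℕ} (hℓ : ℓ ∈ ThetaSet α c₁ t j) :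
    ((2 : ℝ) ^ ℓ)⁻¹ ≤ 2 ^ 4 * c₁ * ((2 : ℝ) ^ (-(j : ℝ)) + t * (2 : ℝ) ^ ((α - 1) * j)) := by
  obtain ⟨-, h⟩ := hℓ
  set K : ℝ := 2 ^ 4 * c₁
  have hx : (0 : ℝ) < 2 ^ ℓ := by positivity
  have hP : (0 : ℝ) ≤ 2 ^ (α * j) := by positivity
  rw [add_mul, one_mul, rpow_add two_pos, rpow_natCast] at h
  rw [sub_mul, one_mul, rpow_sub two_pos, rpow_neg zero_le_two, rpow_natCast,
    show K * ((2 ^ j)⁻¹ + t * (2 ^ (α * j) / 2 ^ j)) = K * (1 + t * 2 ^ (α * j)) / 2 ^ j by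
      field_simp,
    inv_le_comm₀ hx (by positivity), inv_div, div_le_iff₀ (by positivity)]
  rcases le_total ℓ j with hlj | hjl
  · have hpP : (2 : ℝ) ^ (α * ℓ) ≤ 2 ^ (α * j) :=
      rpow_le_rpow_of_exponent_le one_le_two (mul_le_mul_of_nonneg_left (by exact_mod_cast hlj) hα)
    calc (2 : ℝ) ^ j ≤ K * (2 ^ ℓ + t * (2 ^ ℓ * 2 ^ (α * ℓ))) := h
      _ = 2 ^ ℓ * (K * (1 + t * 2 ^ (α * ℓ))) := by ring
      _ ≤ 2 ^ ℓ * (K * (1 + t * 2 ^ (α * j))) := by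
        have : 0 ≤ K := zero_le_one.trans hc₁
        gcongr
  · calc (2 : ℝ) ^ j ≤ 2 ^ ℓ := pow_le_pow_right₀ one_le_two hjl
      _ ≤ 2 ^ ℓ * (K * (1 + t * 2 ^ (α * j))) :=
        le_mul_of_one_le_right hx.le (by nlinarith [mul_nonneg ht hP])

theorem dyadic_sums_interaction_set
    (α : ℝ) (hα : 0 < α) (c₁ : ℝ) (hc₁ : 1 ≤ c₁) (β : ℝ) (hβ : 0 < β) :
    ∃ C > (0:ℝ), ∀ (j : ℕ), 1 ≤ j → ∀ t : ℝ, 0 ≤ t →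
      (∑' ℓ : ThetaSet α c₁ t j, (2:ℝ) ^ (-(β * ((ℓ : ℕ) : ℝ))))
          ≤ C * ((2:ℝ) ^ (-(j:ℝ)) + t * (2:ℝ) ^ ((α - 1) * (j:ℝ))) ^ β ∧
      (∑' ℓ : ThetaSet α c₁ t j, (2:ℝ) ^ (β * ((ℓ : ℕ) : ℝ)))
          ≤ C * ((2:ℝ) ^ (j:ℕ) + t * (2:ℝ) ^ ((1 + α) * (j:ℝ))) ^ β := by
  have hq1 : (2 : ℝ) ^ (-β) < 1 := rpow_lt_one_of_one_lt_of_neg one_lt_two (neg_neg_of_pos hβ)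
  have hK : (0 : ℝ) ≤ 2 ^ 4 * c₁ := by positivity
  refine ⟨(2 ^ 4 * c₁) ^ β / (1 - 2 ^ (-β)), div_pos (by positivity) (sub_pos.2 hq1), ?_⟩
  intro j _ t ht
  constructor
  · calc _ ≤ (2 ^ 4 * c₁ * ((2:ℝ) ^ (-(j:ℝ)) + t * 2 ^ ((α - 1) * (j:ℝ)))) ^ β / (1 - 2 ^ (-β)) :=
          tsum_rpow_neg_mul_le one_lt_two hβ (by positivity)
            fun ℓ hℓ => inv_two_pow_le_of_mem_thetaSet hα.le (by linarith) ht hℓ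
      _ = _ := by rw [mul_rpow hK (by positivity)]; ring
  · calc _ ≤ (2 ^ 4 * c₁ * ((2:ℝ) ^ j + t * 2 ^ ((1 + α) * (j:ℝ)))) ^ β / (1 - 2 ^ (-β)) :=
          tsum_rpow_mul_le one_lt_two hβ (by positivity) fun ℓ hℓ => hℓ.1
      _ = _ := by rw [mul_rpow hK (by positivity)]; ring
end
end

section
/- Absolute continuity from everywhere-existing integrable right derivatives (Lemma 7.4). Let a < b be reals and f : [a,b] → ℝ be continuous. Assume that for every t ∈ [a,b) the right derivative g(t) := lim_{ε↓0} (f(t+ε) − f(t))/ε exists, and that g is Lebesgue integrable on [a,b]. Then f is absolutely continuous on [a,b]; in particular f(x) = f(a) + ∫_a^x g(t) dt for every x ∈ [a,b]. -/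
open MeasureTheory Filter Set Topology

theorem hasDerivWithinAt_Ioi_iff_tendsto_slope_zero_right {F : Type*} [NormedAddCommGroup F]
    [NormedSpace ℝ F] {f : ℝ → F} {f' : F} {x : ℝ} :
    HasDerivWithinAt f f' (Ioi x) x ↔
      Tendsto (fun t ↦ t⁻¹ • (f (x + t) - f x)) (𝓝[>] 0) (𝓝 f') := by
  have : 𝓝[>] x = map (x + ·) (𝓝[>] 0) := by simp
  rw [hasDerivWithinAt_iff_tendsto_slope' (by simp), this, tendsto_map'_iff]
  simp [slope, Function.comp_def]

theorem abs_continuous_of_right_deriv_general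
    (a b : ℝ) (f g : ℝ → ℝ)
    (hf : ContinuousOn f (Set.Icc a b))
    (hg : ∀ t ∈ Set.Ico a b,
      Tendsto (fun ε : ℝ => (f (t + ε) - f t) / ε) (nhdsWithin 0 (Set.Ioi 0)) (nhds (g t)))
    (hint : IntegrableOn g (Set.Icc a b)) :
    ∀ x ∈ Set.Icc a b, f x = f a + ∫ t in a..x, g t := by
  intro x ⟨hax, hxb⟩
  have hderiv (t : ℝ) (ht : t ∈ Ioo a x) : HasDerivWithinAt f (g t) (Ioi t) t :=
    hasDerivWithinAt_Ioi_iff_tendsto_slope_zero_right.2 <| by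
      simpa only [smul_eq_mul, ← div_eq_inv_mul] using hg t ⟨ht.1.le, ht.2.trans_le hxb⟩
  have hint_ax : IntervalIntegrable g volume a x :=
    (intervalIntegrable_iff_integrableOn_Icc_of_le hax).2 (hint.mono_set (Icc_subset_Icc_right hxb))
  rw [intervalIntegral.integral_eq_sub_of_hasDeriv_right_of_le hax
    (hf.mono (Icc_subset_Icc_right hxb)) hderiv hint_ax]
  ring

theorem abs_continuous_of_right_deriv
    (a b : ℝ) (hab : a < b) (f g : ℝ → ℝ)
    (hf : ContinuousOn f (Set.Icc a b))
    (hg : ∀ t ∈ Set.Ico a b,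
      Tendsto (fun ε : ℝ => (f (t + ε) - f t) / ε) (nhdsWithin 0 (Set.Ioi 0)) (nhds (g t)))
    (hint : IntegrableOn g (Set.Icc a b)) :
    ∀ x ∈ Set.Icc a b, f x = f a + ∫ t in a..x, g t :=
  abs_continuous_of_right_deriv_general a b f g hf hg hint
end

section
/- Deterministic core of the random transport equation (from the proof of Theorem 7.5). Let d ≥ 1, let b : ℝ_+×ℝ^d → ℝ^d be continuous, and let ℓ : ℝ_+ → ℝ^d be right-continuous and locally bounded. Suppose {X_{s,t} : 0 ≤ s ≤ t} is a family of maps X_{s,t} : ℝ^d → ℝ^d such that: (a) X_{s,t}(x) = x + ∫_s^t (b(r, X_{s,r}(x)) + ℓ(r)) dr for all 0 ≤ s ≤ t and x; (b) X_{s,t} = X_{r,t} ∘ X_{s,r} for all s ≤ r ≤ t; (c) each X_{s,t} is a C¹-diffeomorphism of ℝ^d; (d) for every t ≥ 0 and R > 0, sup_{|x|≤R} |∇(X_{t,t+ε}^{-1})(x) − I| → 0 as ε ↓ 0, and sup_{t≤T, |x|≤R}(|X_{0,t}^{-1}(x)| + |∇(X_{0,t}^{-1})(x)|) < ∞ for all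 T, R > 0. Then for every φ ∈ C¹_b(ℝ^d), the function u(t,x) := φ(X_{0,t}^{-1}(x)) satisfies: u(0,x) = φ(x); x ↦ u(t,x) is continuously differentiable for every t; for every (t,x) ∈ ℝ_+×ℝ^d the right derivative ∂_t^+ u(t,x) := lim_{ε↓0}(u(t+ε,x) − u(t,x))/ε exists and equals −(b(t,x) + ℓ(t))·∇_x u(t,x); and for each x, t ↦ u(t,x) is absolutely continuous on every compact interval, so that ∂_t u(t,x) + (b(t,x) + ℓ(t))·∇_x u(t,x) = 0 for Lebesgue-almost every t. -/
/-
Let `y_ε := X_{t,t+ε}⁻¹ x`, so that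
`x = X_{t,t+ε} y_ε = y_ε + ∫_t^{t+ε} (b(r, X_{t,r} y_ε) + ℓ(r)) dr`.
For small `ε` the Jacobian of `X_{t,t+ε}⁻¹` is close to `I`, so this inverse is `2`-Lipschitz
near `x` and `|y_ε - x| ≤ 2 |X_{t,t+ε} x - x| = O(ε)`; hence the whole trajectory `X_{t,r} y_ε`,
`r ∈ [t, t+ε]`, stays within `O(ε)` of `x`. Continuity of `b` and right-continuity of `ℓ` then
give `(y_ε - x) / ε → -(b(t,x) + ℓ(t))`, and since `X_{0,t+ε}⁻¹ = X_{0,t}⁻¹ ∘ X_{t,t+ε}⁻¹` the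
chain rule gives the right derivative of `u`. By the flow property and the locally uniform bound
on `∇X_{0,t}⁻¹`, `t ↦ u(t,x)` is also left-continuous; a continuous function whose right
derivative exists and is bounded is the integral of it, the right derivative being automatically
measurable.

The integrals in the integral equation are Bochner integrals, which vanish when the integrand is
not integrable, so integrability of `r ↦ b(r, X_{s,r} x) + ℓ(r)` has to be proved. It comes from
the fact that primitives of arbitrary functions are a.e. measurable, together with a
continuous-induction bound on the trajectory.
-/

open MeasureTheory Filter

noncomputable section

open Set Topology Metric

section RealAnalysis

variable {E : Type*} [NormedAddCommGroup E] [NormedSpace ℝ E]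

theorem hasDerivWithinAt_Ioi_iff_tendsto_slope_zero {f : ℝ → E} {f' : E} {x : ℝ} :
    HasDerivWithinAt f f' (Ioi x) x ↔
      Tendsto (fun ε => ε⁻¹ • (f (x + ε) - f x)) (𝓝[>] 0) (𝓝 f') := by
  have : 𝓝[>] x = map (x + ·) (𝓝[>] 0) := by simp
  rw [hasDerivWithinAt_iff_tendsto_slope' self_notMem_Ioi, this, tendsto_map'_iff]
  simp [slope, Function.comp_def]

theorem continuousOn_Icc_of_continuousWithinAt_Ici_Iio {F : Type*} [TopologicalSpace F]
    {g : ℝ → F} {a b : ℝ} (hright : ∀ s ∈ Icc a b, ContinuousWithinAt g (Ici s) s)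
    (hleft : ∀ s ∈ Ioc a b, ContinuousWithinAt g (Iio s) s) :
    ContinuousOn g (Icc a b) := by
  intro s hs
  rcases hs.1.eq_or_lt with rfl | has
  · exact (hright _ hs).mono Icc_subset_Ici_self
  · refine (continuousAt_iff_continuous_left_right.2 ⟨?_, hright s hs⟩).continuousWithinAt
    exact continuousWithinAt_Iio_iff_Iic.1 (hleft s ⟨has, hs.2⟩)

/-- The primitive is continuous on the interval where `f` is integrable and vanishes beyond it. -/
theorem aestronglyMeasurable_primitive (f : ℝ → E) (a : ℝ) :
    AEStronglyMeasurable (fun r => ∫ x in a..r, f x) (volume.restrict (Ici a)) := by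
  set D := {r | a ≤ r ∧ IntervalIntegrable f volume a r}
  have hD : D.OrdConnected := ⟨fun r₁ h₁ r₂ h₂ r hr =>
    ⟨h₁.1.trans hr.1,
      h₂.2.mono_set (uIcc_subset_uIcc_left (mem_uIcc_of_le (h₁.1.trans hr.1) hr.2))⟩⟩
  have hIcc : ∀ r ∈ D, ContinuousOn (fun r => ∫ x in a..r, f x) (Icc a r) := fun r hr => by
    simpa [uIcc_of_le hr.1] using
      intervalIntegral.continuousOn_primitive_interval' hr.2 left_mem_uIcc
  have hcont : ContinuousOn (fun r => ∫ x in a..r, f x) D := by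
    intro r hr
    by_cases h : ∃ r' ∈ D, r < r'
    · obtain ⟨r', hr', hrr'⟩ := h
      exact (hIcc r' hr' r ⟨hr.1, hrr'.le⟩).mono_of_mem_nhdsWithin
        (mem_nhdsWithin.2 ⟨Iio r', isOpen_Iio, hrr', fun ρ hρ => ⟨hρ.2.1, le_of_lt hρ.1⟩⟩)
    · push Not at h
      exact (hIcc r hr r ⟨hr.1, le_rfl⟩).mono fun ρ hρ => ⟨hρ.1, h ρ hρ⟩
  have hDa : D ⊆ Ici a := fun r hr => hr.1
  rw [← union_sdiff_cancel hDa, aestronglyMeasurable_union_iff]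
  refine ⟨hcont.aestronglyMeasurable hD.measurableSet,
    (aestronglyMeasurable_const (b := (0 : E))).congr ?_⟩
  refine (ae_restrict_iff' (measurableSet_Ici.diff hD.measurableSet)).2 (ae_of_all _ fun r hr => ?_)
  exact (intervalIntegral.integral_undef fun h => hr.2 ⟨hr.1, h⟩).symm

theorem tendsto_integral_nhdsLT_zero (f : ℝ → E) (s : ℝ) :
    Tendsto (fun u => ∫ r in u..s, f r) (𝓝[<] s) (𝓝 0) := by
  by_cases h : ∃ s₀ < s, IntervalIntegrable f volume s₀ s
  · obtain ⟨s₀, hs₀, hint⟩ := h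
    have hcont := intervalIntegral.continuousOn_primitive_interval_left
      ((intervalIntegrable_iff' enorm_ne_top).1 hint) s right_mem_uIcc
    rw [ContinuousWithinAt, intervalIntegral.integral_same] at hcont
    refine hcont.mono_left (nhdsWithin_le_of_mem ?_)
    exact mem_of_superset (Ico_mem_nhdsLT hs₀) (Ico_subset_Icc_self.trans Icc_subset_uIcc)
  · push Not at h
    refine tendsto_const_nhds.congr' ?_
    filter_upwards [self_mem_nhdsWithin] with u hu
    exact (intervalIntegral.integral_undef (h u hu)).symm

/-- Continuous induction: as long as the primitive stays below `R` the bound on `f` keeps it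
below `C (r - s) < R`, so it never reaches `R`. -/
theorem norm_integral_le_of_bootstrap {f : ℝ → E} {s t C R : ℝ} (hC : 0 ≤ C)
    (hCR : C * (t - s) < R) (hint : IntervalIntegrable f volume s t)
    (hf : ∀ r ∈ Ioc s t, ‖∫ ρ in s..r, f ρ‖ < R → ‖f r‖ ≤ C) :
    ∀ r ∈ Icc s t, ‖∫ ρ in s..r, f ρ‖ ≤ C * (r - s) := by
  set G := fun r => ∫ ρ in s..r, f ρ
  have key : ∀ r ∈ Icc s t, (∀ ρ ∈ Ioo s r, ‖G ρ‖ < R) → ‖G r‖ ≤ C * (r - s) := by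
    intro r hr hG
    have := intervalIntegral.norm_integral_le_of_norm_le_const_ae (a := s) (b := r) (C := C)
      (f := f) ?_
    · rwa [abs_of_nonneg (sub_nonneg.2 hr.1)] at this
    filter_upwards [Measure.ae_ne volume r] with ρ hρr hρ
    rw [uIoc_of_le hr.1] at hρ
    exact hf ρ ⟨hρ.1, hρ.2.trans hr.2⟩ (hG ρ ⟨hρ.1, lt_of_le_of_ne hρ.2 hρr⟩)
  set B := Icc s t ∩ G ⁻¹' {v | R ≤ ‖v‖}
  have hB : B = ∅ := by
    by_contra hne
    have hBc : IsClosed B :=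
      ((intervalIntegral.continuousOn_primitive_interval' hint left_mem_uIcc).mono
        Icc_subset_uIcc).preimage_isClosed_of_isClosed isClosed_Icc
        (isClosed_le continuous_const continuous_norm)
    have hBbdd : BddBelow B := ⟨s, fun r hr => hr.1.1⟩
    have hτ := hBc.csInf_mem (nonempty_iff_ne_empty.2 hne) hBbdd
    have hGτ := key _ hτ.1 fun ρ hρ => not_le.1 fun h =>
      (csInf_le hBbdd ⟨⟨hρ.1.le, hρ.2.le.trans hτ.1.2⟩, h⟩).not_gt hρ.2
    have : C * (sInf B - s) ≤ C * (t - s) := by gcongr; exact hτ.1.2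
    have hRτ : R ≤ ‖G (sInf B)‖ := hτ.2
    linarith
  exact fun r hr => key r hr fun ρ hρ => not_le.1 fun h =>
    hB.subset ⟨⟨hρ.1.le, hρ.2.le.trans hr.2⟩, h⟩

theorem tendsto_inv_smul_integral_of_norm_sub_le [CompleteSpace E] {g : ℝ → ℝ → E} {t : ℝ} {v : E}
    (hint : ∀ᶠ ε in 𝓝[>] 0, IntervalIntegrable (g ε) volume t (t + ε))
    (hg : ∀ η > 0, ∀ᶠ ε in 𝓝[>] 0, ∀ r ∈ Ioc t (t + ε), ‖g ε r - v‖ ≤ η) :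
    Tendsto (fun ε => ε⁻¹ • ∫ r in t..t + ε, g ε r) (𝓝[>] 0) (𝓝 v) := by
  rw [Metric.tendsto_nhds]
  intro η hη
  filter_upwards [hint, hg (η / 2) (half_pos hη), self_mem_nhdsWithin] with ε hint hgε (hε : 0 < ε)
  have hsub : (ε⁻¹ • ∫ r in t..t + ε, g ε r) - v = ε⁻¹ • ∫ r in t..t + ε, (g ε r - v) := by
    rw [intervalIntegral.integral_sub hint intervalIntegrable_const,
      intervalIntegral.integral_const, add_sub_cancel_left, smul_sub, inv_smul_smul₀ hε.ne']
  have hle : ‖∫ r in t..t + ε, (g ε r - v)‖ ≤ η / 2 * ε := by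
    have := intervalIntegral.norm_integral_le_of_norm_le_const (a := t) (b := t + ε)
      (fun r hr => hgε r (by rwa [uIoc_of_le (by linarith)] at hr))
    rwa [add_sub_cancel_left, abs_of_pos hε] at this
  rw [dist_eq_norm, hsub, norm_smul, norm_inv, Real.norm_of_nonneg hε.le]
  calc ε⁻¹ * ‖∫ r in t..t + ε, (g ε r - v)‖ ≤ ε⁻¹ * (η / 2 * ε) := by gcongr
    _ < η := by field_simp; linarith

theorem integral_eq_sub_of_hasDerivWithinAt_Ioi_of_norm_le [CompleteSpace E] {f f' : ℝ → E}
    {a b C : ℝ} (hab : a ≤ b) (hf : ContinuousOn f (Icc a b))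
    (hderiv : ∀ x ∈ Ioo a b, HasDerivWithinAt f (f' x) (Ioi x) x)
    (hbound : ∀ x ∈ Ioo a b, ‖f' x‖ ≤ C) :
    ∫ x in a..b, f' x = f b - f a := by
  refine intervalIntegral.integral_eq_sub_of_hasDeriv_right_of_le hab hf hderiv ?_
  -- `f'` is the right derivative of `f`, which is Borel measurable whatever `f` is
  have hmeas : AEStronglyMeasurable f' (volume.restrict (Ioo a b)) :=
    (aestronglyMeasurable_derivWithin_Ioi f _).congr <| (ae_restrict_iff' measurableSet_Ioo).2 <|
      ae_of_all _ fun x hx => (hderiv x hx).derivWithin (uniqueDiffWithinAt_Ioi x)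
  exact (intervalIntegrable_iff_integrableOn_Ioo_of_le hab).2 <| IntegrableOn.of_bound
    measure_Ioo_lt_top hmeas C ((ae_restrict_iff' measurableSet_Ioo).2 (ae_of_all _ hbound))

theorem norm_sub_le_two_mul_of_norm_fderiv_sub_id_le {g : E → E} {R : ℝ}
    (hg : Differentiable ℝ g)
    (hg' : ∀ w : E, ‖w‖ ≤ R → ‖fderiv ℝ g w - ContinuousLinearMap.id ℝ E‖ ≤ 1) {p q : E}
    (hp : ‖p‖ ≤ R) (hq : ‖q‖ ≤ R) :
    ‖g p - g q‖ ≤ 2 * ‖p - q‖ :=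
  (convex_closedBall (0 : E) R).norm_image_sub_le_of_norm_fderiv_le (fun w _ => hg w)
    (fun w hw => (norm_le_norm_add_norm_sub' _ (ContinuousLinearMap.id ℝ E)).trans
      (by linarith [ContinuousLinearMap.norm_id_le (𝕜 := ℝ) (E := E),
        hg' w (mem_closedBall_zero_iff.1 hw)]))
    (mem_closedBall_zero_iff.2 hq) (mem_closedBall_zero_iff.2 hp)

theorem exists_norm_fderiv_comp_apply_le {ι F G : Type*} [NormedAddCommGroup F] [NormedSpace ℝ F]
    [NormedAddCommGroup G] [NormedSpace ℝ G] {φ : F → G} {g : ι → E → F} {v : ι → E} {x : E}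
    {S : Set ι} (hφ : Differentiable ℝ φ) (hg : ∀ i ∈ S, DifferentiableAt ℝ (g i) x)
    (hDφ : ∃ M, ∀ y, ‖fderiv ℝ φ y‖ ≤ M) (hDg : ∃ M, ∀ i ∈ S, ‖fderiv ℝ (g i) x‖ ≤ M)
    (hv : ∃ M, ∀ i ∈ S, ‖v i‖ ≤ M) :
    ∃ C, ∀ i ∈ S, ‖fderiv ℝ (fun y => φ (g i y)) x (v i)‖ ≤ C := by
  obtain ⟨Mφ, hMφ⟩ := hDφ
  obtain ⟨Mg, hMg⟩ := hDg
  obtain ⟨Mv, hMv⟩ := hv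
  refine ⟨Mφ * Mg * Mv, fun i hi => ?_⟩
  have hMφ0 := (norm_nonneg _).trans (hMφ 0)
  have hMg0 := (norm_nonneg _).trans (hMg i hi)
  rw [fderiv_fun_comp x (hφ _) (hg i hi)]
  calc ‖((fderiv ℝ φ (g i x)).comp (fderiv ℝ (g i) x)) (v i)‖
      ≤ ‖fderiv ℝ φ (g i x)‖ * ‖fderiv ℝ (g i) x‖ * ‖v i‖ :=
        (ContinuousLinearMap.le_opNorm _ _).trans
          (by gcongr; exact ContinuousLinearMap.opNorm_comp_le _ _)
    _ ≤ Mφ * Mg * Mv := by gcongr; exacts [hMφ _, hMg i hi, hMv i hi]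

end RealAnalysis

theorem inverse_flow_comp {α : Type*} {X Y : ℝ → ℝ → α → α}
    (hflow : ∀ s r t : ℝ, 0 ≤ s → s ≤ r → r ≤ t → ∀ x : α, X s t x = X r t (X s r x))
    (hXY : ∀ s t : ℝ, 0 ≤ s → s ≤ t → ∀ x : α, X s t (Y s t x) = x)
    (hYX : ∀ s t : ℝ, 0 ≤ s → s ≤ t → ∀ x : α, Y s t (X s t x) = x)
    {s r t : ℝ} (hs : 0 ≤ s) (hsr : s ≤ r) (hrt : r ≤ t) (x : α) :
    Y s t x = Y s r (Y r t x) := by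
  conv_lhs => rw [← hXY r t (hs.trans hsr) hrt x, ← hXY s r hs hsr (Y r t x),
    ← hflow s r t hs hsr hrt]
  exact hYX s t hs (hsr.trans hrt) _

section Flow

variable {E : Type*} [NormedAddCommGroup E] {b : ℝ → E → E} {ℓ : ℝ → E}

theorem exists_norm_add_le_of_isCompact (hb : Continuous fun p : ℝ × E => b p.1 p.2)
    (hℓb : ∀ T : ℝ, 0 < T → ∃ M : ℝ, ∀ t ∈ Icc (0:ℝ) T, ‖ℓ t‖ ≤ M) {T : ℝ} (hT : 0 < T)
    {K : Set E} (hK : IsCompact K) :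
    ∃ C, ∀ r ∈ Icc 0 T, ∀ w ∈ K, ‖b r w + ℓ r‖ ≤ C := by
  obtain ⟨Mb, hMb⟩ := (isCompact_Icc.prod hK).exists_bound_of_continuousOn hb.continuousOn
  obtain ⟨Mℓ, hMℓ⟩ := hℓb T hT
  exact ⟨Mb + Mℓ, fun r hr w hw =>
    (norm_add_le _ _).trans (add_le_add (hMb (r, w) ⟨hr, hw⟩) (hMℓ r hr))⟩

variable [NormedSpace ℝ E] {X Y : ℝ → ℝ → E → E}

def SolvesIntegralEquation (b : ℝ → E → E) (ℓ : ℝ → E) (X : ℝ → ℝ → E → E) : Prop :=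
  ∀ s t : ℝ, 0 ≤ s → s ≤ t → ∀ x : E, X s t x = x + ∫ r in s..t, (b r (X s r x) + ℓ r)

namespace SolvesIntegralEquation

theorem apply_self (hX : SolvesIntegralEquation b ℓ X) {s : ℝ} (hs : 0 ≤ s) (x : E) :
    X s s x = x := by
  rw [hX s s hs le_rfl, intervalIntegral.integral_same, add_zero]

theorem inverse_apply_self (hX : SolvesIntegralEquation b ℓ X) {s : ℝ} (hs : 0 ≤ s)
    (hYX : ∀ x, Y s s (X s s x) = x) (x : E) : Y s s x = x := by
  simpa only [hX.apply_self hs] using hYX x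

theorem aestronglyMeasurable_integrand (hX : SolvesIntegralEquation b ℓ X)
    (hb : Continuous fun p : ℝ × E => b p.1 p.2) (hℓ : AEStronglyMeasurable ℓ volume)
    {s : ℝ} (hs : 0 ≤ s) (z : E) :
    AEStronglyMeasurable (fun r => b r (X s r z) + ℓ r) (volume.restrict (Ici s)) := by
  have hG := aestronglyMeasurable_primitive (fun r => b r (X s r z) + ℓ r) s
  have hm : AEStronglyMeasurable (fun r => b r (z + ∫ ρ in s..r, (b ρ (X s ρ z) + ℓ ρ)) + ℓ r)
      (volume.restrict (Ici s)) :=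
    (hb.comp_aestronglyMeasurable (aestronglyMeasurable_id.prodMk
      (aestronglyMeasurable_const.add hG))).add hℓ.restrict
  refine hm.congr ?_
  filter_upwards [ae_restrict_mem measurableSet_Ici] with r (hr : s ≤ r)
  rw [hX s r hs hr z]

theorem intervalIntegrable_and_norm_sub_le (hX : SolvesIntegralEquation b ℓ X)
    (hb : Continuous fun p : ℝ × E => b p.1 p.2) (hℓ : AEStronglyMeasurable ℓ volume)
    {s t C : ℝ} {z : E} (hs : 0 ≤ s) (hst : s ≤ t) (hC : 0 ≤ C) (hCt : C * (t - s) < 1)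
    (hbound : ∀ r ∈ Icc s t, ∀ w ∈ closedBall z 1, ‖b r w + ℓ r‖ ≤ C) :
    IntervalIntegrable (fun r => b r (X s r z) + ℓ r) volume s t ∧
      ∀ r ∈ Icc s t, ‖X s r z - z‖ ≤ C * (r - s) := by
  set f := fun r => b r (X s r z) + ℓ r
  have hXf : ∀ r, s ≤ r → X s r z - z = ∫ ρ in s..r, f ρ := fun r hr => by
    rw [hX s r hs hr z, add_sub_cancel_left]
  have hf : ∀ r ∈ Ioc s t, ‖∫ ρ in s..r, f ρ‖ < 1 → ‖f r‖ ≤ C := fun r hr h =>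
    hbound r (Ioc_subset_Icc_self hr) _
      (by rw [mem_closedBall, dist_eq_norm, hXf r hr.1.le]; exact h.le)
  -- where `f` fails to be integrable the primitive is `0`
  have hsmall : ∀ r ∈ Icc s t, ‖∫ ρ in s..r, f ρ‖ < 1 := by
    intro r hr
    by_cases hint : IntervalIntegrable f volume s r
    · calc ‖∫ ρ in s..r, f ρ‖ ≤ C * (r - s) :=
            norm_integral_le_of_bootstrap hC (by nlinarith [hr.2]) hint
              (fun ρ hρ => hf ρ ⟨hρ.1, hρ.2.trans hr.2⟩) r ⟨hr.1, le_rfl⟩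
        _ ≤ C * (t - s) := by gcongr; exact hr.2
        _ < 1 := hCt
    · simp [intervalIntegral.integral_undef hint]
  have hint : IntervalIntegrable f volume s t :=
    (intervalIntegrable_iff_integrableOn_Ioc_of_le hst).2 <| IntegrableOn.of_bound
      measure_Ioc_lt_top
      ((hX.aestronglyMeasurable_integrand hb hℓ hs z).mono_set fun r hr => hr.1.le) C
      ((ae_restrict_iff' measurableSet_Ioc).2 <| ae_of_all _ fun r hr =>
        hf r hr (hsmall r (Ioc_subset_Icc_self hr)))
  refine ⟨hint, fun r hr => ?_⟩
  rw [hXf r hr.1]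
  exact norm_integral_le_of_bootstrap hC hCt hint hf r hr

theorem exists_eventually_norm_flow_inverse_sub_le [ProperSpace E]
    (hX : SolvesIntegralEquation b ℓ X) (hb : Continuous fun p : ℝ × E => b p.1 p.2)
    (hℓ : AEStronglyMeasurable ℓ volume)
    (hℓb : ∀ T : ℝ, 0 < T → ∃ M : ℝ, ∀ t ∈ Icc (0:ℝ) T, ‖ℓ t‖ ≤ M)
    (hYd : ∀ s t : ℝ, 0 ≤ s → s ≤ t → Differentiable ℝ (Y s t))
    (hYX : ∀ s t : ℝ, 0 ≤ s → s ≤ t → ∀ x : E, Y s t (X s t x) = x) {t : ℝ} (ht : 0 ≤ t)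
    (hYjac : ∀ R > (0:ℝ), ∃ ε₀ > (0:ℝ), ∀ ε : ℝ, 0 < ε → ε < ε₀ → ∀ w : E, ‖w‖ ≤ R →
      ‖fderiv ℝ (Y t (t + ε)) w - ContinuousLinearMap.id ℝ E‖ ≤ 1)
    (x : E) :
    ∃ C ≥ 0, ∀ᶠ ε in 𝓝[>] 0,
      IntervalIntegrable (fun r => b r (X t r (Y t (t + ε) x)) + ℓ r) volume t (t + ε) ∧
        ∀ r ∈ Icc t (t + ε), ‖X t r (Y t (t + ε) x) - x‖ ≤ C * ε := by
  obtain ⟨C, hC⟩ := exists_norm_add_le_of_isCompact hb hℓb (T := t + 1) (by linarith)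
    (isCompact_closedBall x 2)
  have hC0 : 0 ≤ C :=
    (norm_nonneg _).trans (hC t ⟨ht, by linarith⟩ x (mem_closedBall_self (by norm_num)))
  obtain ⟨ε₀, hε₀, hjac⟩ := hYjac (‖x‖ + 2) (by positivity)
  refine ⟨3 * C, by positivity, ?_⟩
  filter_upwards [Ioo_mem_nhdsGT (show (0:ℝ) < min (min 1 ε₀) (1 / (2 * C + 1)) by positivity)]
    with ε ⟨hε, hεlt⟩
  simp only [lt_min_iff, lt_div_iff₀ (by positivity : (0:ℝ) < 2 * C + 1)] at hεlt
  obtain ⟨⟨hε1, hεε₀⟩, hCε⟩ := hεlt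
  have htε : t ≤ t + ε := by linarith
  have hdisp : ∀ z ∈ closedBall x 1,
      IntervalIntegrable (fun r => b r (X t r z) + ℓ r) volume t (t + ε) ∧
        ∀ r ∈ Icc t (t + ε), ‖X t r z - z‖ ≤ C * (r - t) := fun z hz =>
    hX.intervalIntegrable_and_norm_sub_le hb hℓ ht htε hC0 (by nlinarith) fun r hr w hw =>
      hC r ⟨ht.trans hr.1, by linarith [hr.2]⟩ w <| (dist_triangle w z x).trans
        (by linarith [mem_closedBall.1 hw, mem_closedBall.1 hz])
  have hXx : ‖X t (t + ε) x - x‖ ≤ C * ε := by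
    simpa using (hdisp x (mem_closedBall_self zero_le_one)).2 (t + ε) ⟨htε, le_rfl⟩
  have hy : ‖Y t (t + ε) x - x‖ ≤ 2 * (C * ε) := by
    have hlip := norm_sub_le_two_mul_of_norm_fderiv_sub_id_le (hYd t (t + ε) ht htε)
      (hjac ε hε hεε₀) (p := x) (q := X t (t + ε) x) (by linarith)
      (by linarith [norm_le_norm_add_norm_sub' (X t (t + ε) x) x])
    rw [hYX t (t + ε) ht htε x, norm_sub_rev x] at hlip
    linarith
  obtain ⟨hint, hdispy⟩ := hdisp _ (by rw [mem_closedBall, dist_eq_norm]; nlinarith)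
  refine ⟨hint, fun r hr => ?_⟩
  calc ‖X t r (Y t (t + ε) x) - x‖
      ≤ ‖X t r (Y t (t + ε) x) - Y t (t + ε) x‖ + ‖Y t (t + ε) x - x‖ :=
        norm_sub_le_norm_sub_add_norm_sub _ _ _
    _ ≤ C * (r - t) + 2 * (C * ε) := add_le_add (hdispy r hr) hy
    _ ≤ 3 * C * ε := by nlinarith [hr.2]

theorem hasDerivWithinAt_inverse [ProperSpace E]
    (hX : SolvesIntegralEquation b ℓ X) (hb : Continuous fun p : ℝ × E => b p.1 p.2)
    (hℓ : AEStronglyMeasurable ℓ volume)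
    (hℓb : ∀ T : ℝ, 0 < T → ∃ M : ℝ, ∀ t ∈ Icc (0:ℝ) T, ‖ℓ t‖ ≤ M)
    (hYd : ∀ s t : ℝ, 0 ≤ s → s ≤ t → Differentiable ℝ (Y s t))
    (hXY : ∀ s t : ℝ, 0 ≤ s → s ≤ t → ∀ x : E, X s t (Y s t x) = x)
    (hYX : ∀ s t : ℝ, 0 ≤ s → s ≤ t → ∀ x : E, Y s t (X s t x) = x) {t : ℝ} (ht : 0 ≤ t)
    (hℓt : ContinuousWithinAt ℓ (Ici t) t)
    (hYjac : ∀ R > (0:ℝ), ∃ ε₀ > (0:ℝ), ∀ ε : ℝ, 0 < ε → ε < ε₀ → ∀ w : E, ‖w‖ ≤ R →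
      ‖fderiv ℝ (Y t (t + ε)) w - ContinuousLinearMap.id ℝ E‖ ≤ 1)
    (x : E) :
    HasDerivWithinAt (fun ε => Y t (t + ε) x) (-(b t x + ℓ t)) (Ioi 0) 0 := by
  obtain ⟨C, hC0, hC⟩ := hX.exists_eventually_norm_flow_inverse_sub_le hb hℓ hℓb hYd hYX ht hYjac x
  -- `x = X t (t + ε) (Y t (t + ε) x)` expresses `Y t (t + ε) x - x` as minus an integral
  have hslope : ∀ᶠ ε in 𝓝[>] 0,
      -(ε⁻¹ • ∫ r in t..t + ε, (b r (X t r (Y t (t + ε) x)) + ℓ r)) =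
        ε⁻¹ • (Y t (t + (0 + ε)) x - Y t (t + 0) x) := by
    filter_upwards [self_mem_nhdsWithin] with ε (hε : 0 < ε)
    have hx := hX t (t + ε) ht (by linarith) (Y t (t + ε) x)
    rw [hXY t (t + ε) ht (by linarith)] at hx
    rw [zero_add, add_zero, hX.inverse_apply_self ht (hYX t t ht le_rfl), ← smul_neg]
    congr 1
    conv_rhs => arg 2; rw [hx]
    abel
  rw [hasDerivWithinAt_Ioi_iff_tendsto_slope_zero]
  refine ((tendsto_inv_smul_integral_of_norm_sub_le (hC.mono fun _ h => h.1) ?_).neg).congr' hslope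
  intro η hη
  obtain ⟨δ, hδ, hbδ⟩ := Metric.continuousAt_iff.1 (hb.continuousAt (x := (t, x))) (η / 2)
    (half_pos hη)
  obtain ⟨δ', hδ', hℓδ⟩ := Metric.continuousWithinAt_iff.1 hℓt (η / 2) (half_pos hη)
  filter_upwards [hC, Ioo_mem_nhdsGT (show (0:ℝ) < min δ δ' / (C + 1) by positivity)]
    with ε hε ⟨hε0, hεlt⟩ r hr
  rw [lt_div_iff₀ (by positivity), lt_min_iff] at hεlt
  have hrt : dist r t ≤ ε := by
    rw [Real.dist_eq, abs_of_pos (by linarith [hr.1])]; linarith [hr.2]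
  have hXr : dist (X t r (Y t (t + ε) x)) x ≤ C * ε := by
    rw [dist_eq_norm]; exact hε.2 r (Ioc_subset_Icc_self hr)
  have h1 : dist (b r (X t r (Y t (t + ε) x))) (b t x) < η / 2 :=
    @hbδ (r, X t r (Y t (t + ε) x)) (by
      rw [Prod.dist_eq]; exact max_lt (by nlinarith) (by nlinarith))
  have h2 : dist (ℓ r) (ℓ t) < η / 2 := hℓδ (le_of_lt hr.1 : t ≤ r) (by nlinarith)
  rw [dist_eq_norm] at h1 h2
  calc ‖b r (X t r (Y t (t + ε) x)) + ℓ r - (b t x + ℓ t)‖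
      = ‖(b r (X t r (Y t (t + ε) x)) - b t x) + (ℓ r - ℓ t)‖ := by congr 1; abel
    _ ≤ ‖b r (X t r (Y t (t + ε) x)) - b t x‖ + ‖ℓ r - ℓ t‖ := norm_add_le _ _
    _ ≤ η := by linarith

theorem continuousWithinAt_inverse_Iio (hX : SolvesIntegralEquation b ℓ X)
    (hflow : ∀ s r t : ℝ, 0 ≤ s → s ≤ r → r ≤ t → ∀ x : E, X s t x = X r t (X s r x))
    (hYd : ∀ s t : ℝ, 0 ≤ s → s ≤ t → Differentiable ℝ (Y s t))
    (hXY : ∀ s t : ℝ, 0 ≤ s → s ≤ t → ∀ x : E, X s t (Y s t x) = x)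
    (hYX : ∀ s t : ℝ, 0 ≤ s → s ≤ t → ∀ x : E, Y s t (X s t x) = x) {s : ℝ} (hs : 0 < s)
    (hDY : ∀ R > (0:ℝ), ∃ M : ℝ, ∀ u ∈ Icc (0:ℝ) s, ∀ w : E, ‖w‖ ≤ R → ‖fderiv ℝ (Y 0 u) w‖ ≤ M)
    (x : E) :
    ContinuousWithinAt (fun u => Y 0 u x) (Iio s) s := by
  set p := Y 0 s x
  have hXp : ∀ u ∈ Ico 0 s, X 0 u p = x - ∫ r in u..s, (b r (X 0 r p) + ℓ r) := by
    intro u hu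
    have h := hX u s hu.1 hu.2.le (X 0 u p)
    rw [← hflow 0 u s le_rfl hu.1 hu.2.le, hXY 0 s le_rfl hs.le] at h
    rw [h, intervalIntegral.integral_congr fun r hr => ?_, add_sub_cancel_right]
    rw [uIcc_of_le hu.2.le] at hr
    simp only [hflow 0 u r le_rfl hu.1 hr.1]
  have hlim : Tendsto (fun u => X 0 u p) (𝓝[<] s) (𝓝 x) := by
    have := (tendsto_integral_nhdsLT_zero (fun r => b r (X 0 r p) + ℓ r) s).const_sub x
    rw [sub_zero] at this
    refine this.congr' ?_
    filter_upwards [Ico_mem_nhdsLT hs] with u hu using (hXp u hu).symm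
  obtain ⟨M, hM⟩ := hDY (‖x‖ + 1) (by positivity)
  -- the uniform bound on `∇ Y 0 u` makes `Y 0 u` Lipschitz near `x`, and `Y 0 u (X 0 u p) = p`
  have hlip : ∀ᶠ u in 𝓝[<] s, ‖Y 0 u x - p‖ ≤ M * ‖x - X 0 u p‖ := by
    filter_upwards [Ico_mem_nhdsLT hs, hlim (closedBall_mem_nhds x one_pos)] with u hu hux
    have h := (convex_closedBall (0 : E) (‖x‖ + 1)).norm_image_sub_le_of_norm_fderiv_le
      (x := X 0 u p) (y := x) (fun w _ => hYd 0 u le_rfl hu.1 w)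
      (fun w hw => hM u ⟨hu.1, hu.2.le⟩ w (mem_closedBall_zero_iff.1 hw))
      (mem_closedBall_zero_iff.2 (by
        linarith [norm_le_norm_add_norm_sub' (X 0 u p) x, mem_closedBall_iff_norm.1 hux]))
      (mem_closedBall_zero_iff.2 (by linarith : ‖x‖ ≤ ‖x‖ + 1))
    rwa [hYX 0 u le_rfl hu.1] at h
  rw [ContinuousWithinAt, tendsto_iff_norm_sub_tendsto_zero]
  refine squeeze_zero' (Eventually.of_forall fun _ => norm_nonneg _) hlip ?_
  simpa using ((tendsto_iff_norm_sub_tendsto_zero.1 hlim).const_mul M)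
    |>.congr fun u => by rw [norm_sub_rev]

theorem hasDerivWithinAt_transport [ProperSpace E] {F : Type*} [NormedAddCommGroup F]
    [NormedSpace ℝ F] (hX : SolvesIntegralEquation b ℓ X)
    (hb : Continuous fun p : ℝ × E => b p.1 p.2) (hℓ : AEStronglyMeasurable ℓ volume)
    (hℓb : ∀ T : ℝ, 0 < T → ∃ M : ℝ, ∀ t ∈ Icc (0:ℝ) T, ‖ℓ t‖ ≤ M)
    (hflow : ∀ s r t : ℝ, 0 ≤ s → s ≤ r → r ≤ t → ∀ x : E, X s t x = X r t (X s r x))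
    (hYd : ∀ s t : ℝ, 0 ≤ s → s ≤ t → Differentiable ℝ (Y s t))
    (hXY : ∀ s t : ℝ, 0 ≤ s → s ≤ t → ∀ x : E, X s t (Y s t x) = x)
    (hYX : ∀ s t : ℝ, 0 ≤ s → s ≤ t → ∀ x : E, Y s t (X s t x) = x) {t : ℝ} (ht : 0 ≤ t)
    (hℓt : ContinuousWithinAt ℓ (Ici t) t)
    (hYjac : ∀ R > (0:ℝ), ∃ ε₀ > (0:ℝ), ∀ ε : ℝ, 0 < ε → ε < ε₀ → ∀ w : E, ‖w‖ ≤ R →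
      ‖fderiv ℝ (Y t (t + ε)) w - ContinuousLinearMap.id ℝ E‖ ≤ 1)
    {φ : E → F} (hφ : Differentiable ℝ φ) (x : E) :
    HasDerivWithinAt (fun s => φ (Y 0 s x))
      (-(fderiv ℝ (fun y => φ (Y 0 t y)) x (b t x + ℓ t))) (Ioi t) t := by
  have hYtt := hX.inverse_apply_self ht (hYX t t ht le_rfl)
  have hv : HasFDerivAt (fun y => φ (Y 0 t y)) (fderiv ℝ (fun y => φ (Y 0 t y)) x)
      (Y t (t + 0) x) := by
    rw [add_zero, hYtt]
    exact ((hφ.comp (hYd 0 t le_rfl ht)) x).hasFDerivAt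
  have h := hv.comp_hasDerivWithinAt 0
    (hX.hasDerivWithinAt_inverse hb hℓ hℓb hYd hXY hYX ht hℓt hYjac x)
  rw [hasDerivWithinAt_Ioi_iff_tendsto_slope_zero] at h ⊢
  rw [← map_neg]
  refine h.congr' ?_
  filter_upwards [self_mem_nhdsWithin] with ε (hε : 0 < ε)
  simp only [Function.comp_apply, zero_add, add_zero, hYtt,
    ← inverse_flow_comp hflow hXY hYX le_rfl ht (le_add_of_nonneg_right hε.le)]

theorem transport_eq_sub_integral {F : Type*} [NormedAddCommGroup F] [NormedSpace ℝ F]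
    [CompleteSpace F] (hX : SolvesIntegralEquation b ℓ X)
    (hb : Continuous fun p : ℝ × E => b p.1 p.2)
    (hℓb : ∀ T : ℝ, 0 < T → ∃ M : ℝ, ∀ t ∈ Icc (0:ℝ) T, ‖ℓ t‖ ≤ M)
    (hflow : ∀ s r t : ℝ, 0 ≤ s → s ≤ r → r ≤ t → ∀ x : E, X s t x = X r t (X s r x))
    (hYd : ∀ s t : ℝ, 0 ≤ s → s ≤ t → Differentiable ℝ (Y s t))
    (hXY : ∀ s t : ℝ, 0 ≤ s → s ≤ t → ∀ x : E, X s t (Y s t x) = x)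
    (hYX : ∀ s t : ℝ, 0 ≤ s → s ≤ t → ∀ x : E, Y s t (X s t x) = x)
    (hDY : ∀ T > (0:ℝ), ∀ R > (0:ℝ), ∃ M : ℝ, ∀ u ∈ Icc (0:ℝ) T, ∀ w : E, ‖w‖ ≤ R →
      ‖fderiv ℝ (Y 0 u) w‖ ≤ M)
    {φ : E → F} (hφ : Differentiable ℝ φ) (hDφ : ∃ M, ∀ y, ‖fderiv ℝ φ y‖ ≤ M) (x : E)
    (hderiv : ∀ s, 0 ≤ s → HasDerivWithinAt (fun s => φ (Y 0 s x))
      (-(fderiv ℝ (fun y => φ (Y 0 s y)) x (b s x + ℓ s))) (Ioi s) s)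
    {t : ℝ} (ht : 0 ≤ t) :
    φ (Y 0 t x) = φ x - ∫ s in (0:ℝ)..t, fderiv ℝ (fun y => φ (Y 0 s y)) x (b s x + ℓ s) := by
  have hY0 := hX.inverse_apply_self le_rfl (hYX 0 0 le_rfl le_rfl)
  rcases ht.eq_or_lt with rfl | ht
  · simp [hY0]
  have hcont : ContinuousOn (fun s => φ (Y 0 s x)) (Icc 0 t) :=
    continuousOn_Icc_of_continuousWithinAt_Ici_Iio
      (fun s hs => continuousWithinAt_Ioi_iff_Ici.1 (hderiv s hs.1).continuousWithinAt)
      fun s hs => (hφ _).continuousAt.comp_continuousWithinAt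
        (hX.continuousWithinAt_inverse_Iio hflow hYd hXY hYX hs.1 (hDY s hs.1) x)
  obtain ⟨C, hC⟩ := exists_norm_fderiv_comp_apply_le (S := Icc 0 t) hφ
    (fun s hs => hYd 0 s le_rfl hs.1 x) hDφ
    ((hDY t ht (‖x‖ + 1) (by positivity)).imp fun M hM s hs => hM s hs x (by linarith))
    ((exists_norm_add_le_of_isCompact hb hℓb ht isCompact_singleton).imp
      fun K hK s hs => hK s hs x rfl)
  have hFTC := integral_eq_sub_of_hasDerivWithinAt_Ioi_of_norm_le ht.le hcont
    (fun s hs => hderiv s hs.1.le) fun s hs =>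
      (norm_neg _).trans_le (hC s (Ioo_subset_Icc_self hs))
  rw [intervalIntegral.integral_neg, hY0] at hFTC
  rw [sub_eq_add_neg]
  exact sub_eq_iff_eq_add'.1 hFTC.symm

end SolvesIntegralEquation

end Flow

theorem random_transport_deterministic_core_general
    (d : ℕ)
    (b : ℝ → Ed d → Ed d) (ℓ : ℝ → Ed d)
    (hb : Continuous fun p : ℝ × Ed d => b p.1 p.2)
    (hℓr : ∀ t : ℝ, 0 ≤ t → Tendsto ℓ (nhdsWithin t (Set.Ici t)) (nhds (ℓ t)))
    (hℓm : Measurable ℓ)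
    (hℓb : ∀ T : ℝ, 0 < T → ∃ M : ℝ, ∀ t ∈ Set.Icc (0:ℝ) T, ‖ℓ t‖ ≤ M)
    (X Y : ℝ → ℝ → Ed d → Ed d)
    -- (a) integral equation for the flow
    (hXeq : ∀ s t : ℝ, 0 ≤ s → s ≤ t → ∀ x : Ed d,
      X s t x = x + ∫ r in s..t, (b r (X s r x) + ℓ r))
    -- (b) flow property
    (hflow : ∀ s r t : ℝ, 0 ≤ s → s ≤ r → r ≤ t → ∀ x : Ed d,
      X s t x = X r t (X s r x))
    -- (c) each X_{s,t} is a C¹-diffeomorphism with inverse Y_{s,t}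
    (hYC1 : ∀ s t : ℝ, 0 ≤ s → s ≤ t → ContDiff ℝ 1 (Y s t))
    (hXY : ∀ s t : ℝ, 0 ≤ s → s ≤ t → ∀ x : Ed d, X s t (Y s t x) = x)
    (hYX : ∀ s t : ℝ, 0 ≤ s → s ≤ t → ∀ x : Ed d, Y s t (X s t x) = x)
    -- (d) regularity of the inverse maps
    (hYjac : ∀ t : ℝ, 0 ≤ t → ∀ R > (0:ℝ), ∀ δ > (0:ℝ), ∃ ε₀ > (0:ℝ),
      ∀ ε : ℝ, 0 < ε → ε < ε₀ → ∀ x : Ed d, ‖x‖ ≤ R →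
        ‖fderiv ℝ (Y t (t + ε)) x - ContinuousLinearMap.id ℝ (Ed d)‖ ≤ δ)
    (hYloc : ∀ T > (0:ℝ), ∀ R > (0:ℝ), ∃ M : ℝ, ∀ t ∈ Set.Icc (0:ℝ) T,
      ∀ x : Ed d, ‖x‖ ≤ R → ‖Y 0 t x‖ + ‖fderiv ℝ (Y 0 t) x‖ ≤ M)
    -- the data
    (φ : Ed d → ℝ) (hφ : ContDiff ℝ 1 φ)
    (hφb : ∃ M : ℝ, ∀ x : Ed d, |φ x| + ‖fderiv ℝ φ x‖ ≤ M) :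
    -- conclusions for u(t,x) := φ(Y 0 t x)
    (∀ x : Ed d, φ (Y 0 0 x) = φ x) ∧
    (∀ t : ℝ, 0 ≤ t → ContDiff ℝ 1 fun x : Ed d => φ (Y 0 t x)) ∧
    (∀ t : ℝ, 0 ≤ t → ∀ x : Ed d,
      Tendsto (fun ε : ℝ => (φ (Y 0 (t + ε) x) - φ (Y 0 t x)) / ε)
        (nhdsWithin 0 (Set.Ioi 0))
        (nhds (-(fderiv ℝ (fun y : Ed d => φ (Y 0 t y)) x (b t x + ℓ t))))) ∧
    (∀ t : ℝ, 0 ≤ t → ∀ x : Ed d,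
      φ (Y 0 t x) = φ x - ∫ s in (0:ℝ)..t,
        fderiv ℝ (fun y : Ed d => φ (Y 0 s y)) x (b s x + ℓ s)) := by
  have hX : SolvesIntegralEquation b ℓ X := hXeq
  have hYd s t hs hst : Differentiable ℝ (Y s t) := (hYC1 s t hs hst).differentiable one_ne_zero
  have hY0 := hX.inverse_apply_self le_rfl (hYX 0 0 le_rfl le_rfl)
  have hDY : ∀ T > (0:ℝ), ∀ R > (0:ℝ), ∃ M : ℝ, ∀ u ∈ Icc (0:ℝ) T, ∀ w : Ed d, ‖w‖ ≤ R →
      ‖fderiv ℝ (Y 0 u) w‖ ≤ M := fun T hT R hR => (hYloc T hT R hR).imp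
    fun M hM u hu w hw => (le_add_of_nonneg_left (norm_nonneg _)).trans (hM u hu w hw)
  have hderiv t (ht : 0 ≤ t) := hX.hasDerivWithinAt_transport hb hℓm.aestronglyMeasurable hℓb
    hflow hYd hXY hYX ht (hℓr t ht) (fun R hR => hYjac t ht R hR 1 one_pos)
    (hφ.differentiable one_ne_zero)
  refine ⟨fun x => by rw [hY0], fun t ht => hφ.comp (hYC1 0 t le_rfl ht), fun t ht x => ?_,
    fun t ht x => hX.transport_eq_sub_integral hb hℓb hflow hYd hXY hYX hDY
      (hφ.differentiable one_ne_zero)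
      (hφb.imp fun M hM y => (le_add_of_nonneg_left (abs_nonneg _)).trans (hM y)) x
      (fun s hs => hderiv s hs x) ht⟩
  simpa only [smul_eq_mul, div_eq_inv_mul] using
    hasDerivWithinAt_Ioi_iff_tendsto_slope_zero.1 (hderiv t ht x)

theorem random_transport_deterministic_core
    (d : ℕ) (hd : 1 ≤ d)
    (b : ℝ → Ed d → Ed d) (ℓ : ℝ → Ed d)
    (hb : Continuous fun p : ℝ × Ed d => b p.1 p.2)
    (hℓr : ∀ t : ℝ, 0 ≤ t → Tendsto ℓ (nhdsWithin t (Set.Ici t)) (nhds (ℓ t)))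
    (hℓm : Measurable ℓ)
    (hℓb : ∀ T : ℝ, 0 < T → ∃ M : ℝ, ∀ t ∈ Set.Icc (0:ℝ) T, ‖ℓ t‖ ≤ M)
    (X Y : ℝ → ℝ → Ed d → Ed d)
    -- (a) integral equation for the flow
    (hXeq : ∀ s t : ℝ, 0 ≤ s → s ≤ t → ∀ x : Ed d,
      X s t x = x + ∫ r in s..t, (b r (X s r x) + ℓ r))
    -- (b) flow property
    (hflow : ∀ s r t : ℝ, 0 ≤ s → s ≤ r → r ≤ t → ∀ x : Ed d,
      X s t x = X r t (X s r x))
    -- (c) each X_{s,t} is a C¹-diffeomorphism with inverse Y_{s,t}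
    (hXC1 : ∀ s t : ℝ, 0 ≤ s → s ≤ t → ContDiff ℝ 1 (X s t))
    (hYC1 : ∀ s t : ℝ, 0 ≤ s → s ≤ t → ContDiff ℝ 1 (Y s t))
    (hXY : ∀ s t : ℝ, 0 ≤ s → s ≤ t → ∀ x : Ed d, X s t (Y s t x) = x)
    (hYX : ∀ s t : ℝ, 0 ≤ s → s ≤ t → ∀ x : Ed d, Y s t (X s t x) = x)
    -- (d) regularity of the inverse maps
    (hYjac : ∀ t : ℝ, 0 ≤ t → ∀ R > (0:ℝ), ∀ δ > (0:ℝ), ∃ ε₀ > (0:ℝ),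
      ∀ ε : ℝ, 0 < ε → ε < ε₀ → ∀ x : Ed d, ‖x‖ ≤ R →
        ‖fderiv ℝ (Y t (t + ε)) x - ContinuousLinearMap.id ℝ (Ed d)‖ ≤ δ)
    (hYloc : ∀ T > (0:ℝ), ∀ R > (0:ℝ), ∃ M : ℝ, ∀ t ∈ Set.Icc (0:ℝ) T,
      ∀ x : Ed d, ‖x‖ ≤ R → ‖Y 0 t x‖ + ‖fderiv ℝ (Y 0 t) x‖ ≤ M)
    -- the data
    (φ : Ed d → ℝ) (hφ : ContDiff ℝ 1 φ)
    (hφb : ∃ M : ℝ, ∀ x : Ed d, |φ x| + ‖fderiv ℝ φ x‖ ≤ M) :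
    -- conclusions for u(t,x) := φ(Y 0 t x)
    (∀ x : Ed d, φ (Y 0 0 x) = φ x) ∧
    (∀ t : ℝ, 0 ≤ t → ContDiff ℝ 1 fun x : Ed d => φ (Y 0 t x)) ∧
    (∀ t : ℝ, 0 ≤ t → ∀ x : Ed d,
      Tendsto (fun ε : ℝ => (φ (Y 0 (t + ε) x) - φ (Y 0 t x)) / ε)
        (nhdsWithin 0 (Set.Ioi 0))
        (nhds (-(fderiv ℝ (fun y : Ed d => φ (Y 0 t y)) x (b t x + ℓ t))))) ∧
    (∀ t : ℝ, 0 ≤ t → ∀ x : Ed d,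
      φ (Y 0 t x) = φ x - ∫ s in (0:ℝ)..t,
        fderiv ℝ (fun y : Ed d => φ (Y 0 s y)) x (b s x + ℓ s)) :=
  random_transport_deterministic_core_general d b ℓ hb hℓr hℓm hℓb X Y hXeq hflow hYC1 hXY hYX hYjac
    hYloc φ hφ hφb
end
end
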